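/- For every r ∈ (0,1) there exist constants C(r) > 0 and L(r) > 0 such that for every integer N ≥ 1 and every z ∈ E_r, one has |p_N(z·√N)| ≤ C(r)·N^{−1/4}·L(r)^N·|z|^N, where E_r denotes the closed exterior of the ellipse { z ∈ ℂ : (Re z)²/(r^{−1}+r)² + (Im z)²/(r^{−1}−r)² = 1 }, i.e. E_r = { z ∈ ℂ : (Re z)²/(r^{−1}+r)² + (Im z)²/(r^{−1}−r)² ≥ 1 }. -/

import Mathlib

open Real

noncomputable section

/-- The monic (probabilists') Hermite polynomial, evaluated at a complex number. -/
def hermiteH (k : ℕ) (z : ℂ) : ℂ := Polynomial.aeval z (Polynomial.hermite k)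

/-- The normalized Hermite polynomial `p_k = H_k / ((2π)^{1/4} (k!)^{1/2})`. -/
def hermiteP (k : ℕ) (z : ℂ) : ℂ :=
  hermiteH k z / (((2 * π) ^ ((1:ℝ)/4) * Real.sqrt (Nat.factorial k) : ℝ) : ℂ)

/-- The Hermite function `φ_k(z) = p_k(z) exp(−z²/4)`. -/
def hermitePhi (k : ℕ) (z : ℂ) : ℂ := hermiteP k z * Complex.exp (-(z ^ 2) / 4)

/-- The Hermite reproducing kernel `K_N(z₁,z₂) = Σ_{k<N} φ_k(z₁) φ_k(z₂)`. -/
def kernelK (N : ℕ) (z₁ z₂ : ℂ) : ℂ :=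
  ∑ k ∈ Finset.range N, hermitePhi k z₁ * hermitePhi k z₂

/-- The rescaled kernel `K̃_N(z₁,z₂,s) = s^{−1/2} K_N(z₁ s^{−1/2}, z₂ s^{−1/2})`
(principal powers). -/
def kernelKt (N : ℕ) (z₁ z₂ s : ℂ) : ℂ :=
  s ^ (-(1:ℂ)/2) * kernelK N (z₁ * s ^ (-(1:ℂ)/2)) (z₂ * s ^ (-(1:ℂ)/2))

/-- `d(H) = √(1+iH)`, the principal square root. -/
def dC (H : ℝ) : ℂ := (1 + H * Complex.I) ^ ((1:ℂ)/2)

/-- The closed strip `S̄_{α,β} = {z : |Re z| ≤ 2−α, |Im z| ≤ β}`. -/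
def Sbar (α β : ℝ) : Set ℂ := {z : ℂ | |z.re| ≤ 2 - α ∧ |z.im| ≤ β}

/-- The Wigner semicircle density. -/
def wigner (x : ℝ) : ℝ := (2 * π)⁻¹ * Real.sqrt (4 - x ^ 2)

/-- The analytic continuation of the Wigner density,
`w(z) = (2π)⁻¹ (2−z)^{1/2} (2+z)^{1/2}` (principal powers). -/
def wignerC (z : ℂ) : ℂ :=
  (((2 * π)⁻¹ : ℝ) : ℂ) * ((2 - z) ^ ((1:ℂ)/2) * (2 + z) ^ ((1:ℂ)/2))

open Nat in
private lemma aux_nat (m k : ℕ) :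
    (2 * m - 1)‼ * ((2 * m + k).choose k) * (2 ^ m * (2 * m)!) ≤ (2 * m + k) ^ (3 * m) := by
  have hk2 : 2 * m ≤ 2 * m + k := Nat.le_add_right _ _
  have hkN : k ≤ 2 * m + k := Nat.le_add_left _ _
  have h1 : (2 * m - 1)‼ * (2 ^ m * m !) = (2 * m)! := by
    cases m with
    | zero => simp
    | succ n =>
      have h2 : (2 * (n + 1))! = (2 * (n + 1))‼ * (2 * (n + 1) - 1)‼ := by
        have e1 : 2 * (n + 1) = 2 * n + 1 + 1 := by ring
        rw [e1]
        exact Nat.factorial_eq_mul_doubleFactorial (2 * n + 1)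
      rw [h2, Nat.doubleFactorial_two_mul]
      ring
  have h3 : (2 * m + k).choose k * k ! * (2 * m)! = (2 * m + k)! := by
    have := Nat.choose_mul_factorial_mul_factorial hkN
    have e : 2 * m + k - k = 2 * m := by omega
    rwa [e] at this
  have key : ((2 * m - 1)‼ * ((2 * m + k).choose k) * (2 ^ m * (2 * m)!)) * (m ! * k !)
      = (2 * m)! * (2 * m + k)! := by
    calc ((2 * m - 1)‼ * ((2 * m + k).choose k) * (2 ^ m * (2 * m)!)) * (m ! * k !)
        = ((2 * m - 1)‼ * (2 ^ m * m !)) * ((2 * m + k).choose k * k ! * (2 * m)!) := by ring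
      _ = (2 * m)! * (2 * m + k)! := by rw [h1, h3]
  have b1 : (2 * m)! ≤ (2 * m + k) ^ m * m ! := by
    have hd : m ! * (2 * m).descFactorial m = (2 * m)! := by
      have := Nat.factorial_mul_descFactorial (show m ≤ 2 * m by omega)
      have e : 2 * m - m = m := by omega
      rwa [e] at this
    calc (2 * m)! = m ! * (2 * m).descFactorial m := hd.symm
      _ ≤ m ! * (2 * m) ^ m := Nat.mul_le_mul_left _ (Nat.descFactorial_le_pow _ _)
      _ ≤ m ! * (2 * m + k) ^ m := Nat.mul_le_mul_left _ (Nat.pow_le_pow_left hk2 m)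
      _ = (2 * m + k) ^ m * m ! := mul_comm _ _
  have b2 : (2 * m + k)! ≤ (2 * m + k) ^ (2 * m) * k ! := by
    have hd : k ! * (2 * m + k).descFactorial (2 * m) = (2 * m + k)! := by
      have := Nat.factorial_mul_descFactorial hk2
      have e : 2 * m + k - 2 * m = k := by omega
      rwa [e] at this
    calc (2 * m + k)! = k ! * (2 * m + k).descFactorial (2 * m) := hd.symm
      _ ≤ k ! * (2 * m + k) ^ (2 * m) := Nat.mul_le_mul_left _ (Nat.descFactorial_le_pow _ _)
      _ = (2 * m + k) ^ (2 * m) * k ! := mul_comm _ _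
  have main : ((2 * m - 1)‼ * ((2 * m + k).choose k) * (2 ^ m * (2 * m)!)) * (m ! * k !)
      ≤ (2 * m + k) ^ (3 * m) * (m ! * k !) := by
    rw [key]
    calc (2 * m)! * (2 * m + k)!
        ≤ ((2 * m + k) ^ m * m !) * ((2 * m + k) ^ (2 * m) * k !) := Nat.mul_le_mul b1 b2
      _ = (2 * m + k) ^ (3 * m) * (m ! * k !) := by
          rw [show 3 * m = m + 2 * m by ring, pow_add]; ring
  exact Nat.le_of_mul_le_mul_right main (by positivity)

open Nat in
private lemma coeff_term_le (N k : ℕ) (hk : k ≤ N) (hN : 1 ≤ N) {δ A : ℝ}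
    (hδ : 0 < δ) (hA : δ ≤ A) :
    (((Polynomial.hermite N).coeff k).natAbs : ℝ) * (A * Real.sqrt N) ^ k
      ≤ (A * Real.sqrt N) ^ N * (((Real.sqrt 2 * δ)⁻¹ * N) ^ (N - k) / (N - k)!) := by
  have hNpos : (0:ℝ) < N := by exact_mod_cast hN
  have hsN : 0 < Real.sqrt N := Real.sqrt_pos.mpr hNpos
  have hA0 : 0 < A := lt_of_lt_of_le hδ hA
  have hc : 0 < (Real.sqrt 2 * δ)⁻¹ := by positivity
  rcases Nat.even_or_odd (N - k) with he | ho
  · obtain ⟨m, hm⟩ := he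
    have hNe : N = 2 * m + k := by omega
    have hco : (Polynomial.hermite N).coeff k
        = (-1) ^ m * ((2 * m - 1)‼ : ℤ) * ((2 * m + k).choose k : ℤ) := by
      rw [hNe]; exact_mod_cast Polynomial.coeff_hermite_explicit m k
    have hna : ((Polynomial.hermite N).coeff k).natAbs = (2 * m - 1)‼ * (2 * m + k).choose k := by
      rw [hco]
      simp [Int.natAbs_mul, Int.natAbs_pow]
    have hbr : (((Polynomial.hermite N).coeff k).natAbs : ℝ) * (2 ^ m * (2 * m)!)
        ≤ (N : ℝ) ^ (3 * m) := by
      rw [hna, hNe]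
      exact_mod_cast aux_nat m k
    have hbr2 : (((Polynomial.hermite N).coeff k).natAbs : ℝ)
        ≤ (N : ℝ) ^ (3 * m) / (2 ^ m * (2 * m)!) := by
      rw [le_div_iff₀ (by positivity)]
      exact hbr
    have hNk : N - k = 2 * m := by omega
    rw [hNk]
    have hδ2 : ((Real.sqrt 2 * δ)⁻¹ * N * (δ * Real.sqrt N)) ^ (2 * m)
        = (N : ℝ) ^ (3 * m) / 2 ^ m := by
      have e1 : (Real.sqrt 2 * δ)⁻¹ * N * (δ * Real.sqrt N)
          = (Real.sqrt 2)⁻¹ * ((N : ℝ) * Real.sqrt N) := by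
        field_simp
      rw [e1, mul_pow]
      have e2 : ((Real.sqrt 2)⁻¹ : ℝ) ^ (2 * m) = (2 ^ m)⁻¹ := by
        have h22 : ((Real.sqrt 2 : ℝ)⁻¹) ^ 2 = 2⁻¹ := by
          rw [inv_pow, Real.sq_sqrt (by norm_num : (0:ℝ) ≤ 2)]
        rw [pow_mul, h22, inv_pow]
      have e3 : ((N : ℝ) * Real.sqrt N) ^ (2 * m) = (N : ℝ) ^ (3 * m) := by
        rw [mul_pow]
        rw [show ((Real.sqrt N) ^ (2 * m) : ℝ) = (N:ℝ)^m by
          rw [pow_mul, Real.sq_sqrt (le_of_lt hNpos)]]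
        rw [← pow_add]
        congr 1
        ring
      rw [e2, e3]
      rw [div_eq_mul_inv, mul_comm]
    have hpow : (A * Real.sqrt N) ^ (2 * m) * (A * Real.sqrt N) ^ k = (A * Real.sqrt N) ^ N := by
      rw [← pow_add]; congr 1; omega
    calc (((Polynomial.hermite N).coeff k).natAbs : ℝ) * (A * Real.sqrt N) ^ k
        ≤ ((N : ℝ) ^ (3 * m) / (2 ^ m * (2 * m)!)) * (A * Real.sqrt N) ^ k := by
          exact mul_le_mul_of_nonneg_right hbr2 (by positivity)
      _ = (((Real.sqrt 2 * δ)⁻¹ * N * (δ * Real.sqrt N)) ^ (2 * m) / (2 * m)!)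
            * (A * Real.sqrt N) ^ k := by
          rw [hδ2]; field_simp
      _ ≤ (((Real.sqrt 2 * δ)⁻¹ * N * (A * Real.sqrt N)) ^ (2 * m) / (2 * m)!)
            * (A * Real.sqrt N) ^ k := by
          gcongr
      _ = (A * Real.sqrt N) ^ N * (((Real.sqrt 2 * δ)⁻¹ * N) ^ (2 * m) / (2 * m)!) := by
          rw [← hpow, mul_pow ((Real.sqrt 2 * δ)⁻¹ * N)]
          ring
  · have hoadd : Odd (N + k) := by
      have e : N + k = (N - k) + 2 * k := by omega
      rw [e]
      exact ho.add_even (even_two_mul k)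
    rw [Polynomial.coeff_hermite_of_odd_add hoadd]
    simp only [Int.natAbs_zero, Nat.cast_zero, zero_mul]
    positivity

open Nat in
private lemma hermiteH_abs_le (N : ℕ) (hN : 1 ≤ N) {δ : ℝ} (hδ : 0 < δ) (z : ℂ)
    (hz : δ ≤ ‖z‖) :
    ‖hermiteH N (z * (Real.sqrt N : ℝ))‖
      ≤ (‖z‖ * Real.sqrt N) ^ N * Real.exp ((Real.sqrt 2 * δ)⁻¹ * N) := by
  set A := ‖z‖ with hA
  set w : ℂ := z * (Real.sqrt N : ℝ) with hw
  have habsw : ‖w‖ = A * Real.sqrt N := by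
    rw [hw, norm_mul, Complex.norm_of_nonneg (Real.sqrt_nonneg _)]
  have expand : hermiteH N w
      = ∑ k ∈ Finset.range (N + 1), (((Polynomial.hermite N).coeff k : ℤ) : ℂ) * w ^ k := by
    rw [hermiteH, Polynomial.aeval_eq_sum_range' (n := N + 1)
      (by rw [Polynomial.natDegree_hermite]; omega) w]
    simp [zsmul_eq_mul]
  calc ‖hermiteH N w‖
      ≤ ∑ k ∈ Finset.range (N + 1),
          ‖(((Polynomial.hermite N).coeff k : ℤ) : ℂ) * w ^ k‖ := by
        rw [expand]; exact norm_sum_le _ _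
    _ = ∑ k ∈ Finset.range (N + 1),
          (((Polynomial.hermite N).coeff k).natAbs : ℝ) * (A * Real.sqrt N) ^ k := by
        refine Finset.sum_congr rfl fun k _ => ?_
        rw [norm_mul, norm_pow, habsw]
        congr 1
        rw [Complex.norm_intCast, Nat.cast_natAbs, Int.cast_abs]
    _ ≤ ∑ k ∈ Finset.range (N + 1),
          (A * Real.sqrt N) ^ N * (((Real.sqrt 2 * δ)⁻¹ * N) ^ (N - k) / (N - k)!) := by
        refine Finset.sum_le_sum fun k hk => ?_
        exact coeff_term_le N k (by simp at hk; omega) hN hδ hz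
    _ = (A * Real.sqrt N) ^ N *
          ∑ k ∈ Finset.range (N + 1), (((Real.sqrt 2 * δ)⁻¹ * N) ^ (N - k) / (N - k)!) := by
        rw [Finset.mul_sum]
    _ = (A * Real.sqrt N) ^ N *
          ∑ j ∈ Finset.range (N + 1), (((Real.sqrt 2 * δ)⁻¹ * N) ^ j / j !) := by
        congr 1
        have := Finset.sum_range_reflect
          (fun j => (((Real.sqrt 2 * δ)⁻¹ * (N:ℝ)) ^ j / j !)) (N + 1)
        simp only [Nat.add_sub_cancel] at this
        exact this.symm ▸ rfl
    _ ≤ (A * Real.sqrt N) ^ N * Real.exp ((Real.sqrt 2 * δ)⁻¹ * N) := by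
        have hc : (0:ℝ) ≤ (Real.sqrt 2 * δ)⁻¹ * N := by positivity
        have := Real.sum_le_exp_of_nonneg hc (N + 1)
        have hAN : (0:ℝ) ≤ (A * Real.sqrt N) ^ N := by positivity
        exact mul_le_mul_of_nonneg_left this hAN

open Nat in
private lemma sqrt_factorial_ge (N : ℕ) (hN : 1 ≤ N) :
    (N:ℝ) ^ ((1:ℝ)/4) * (Real.sqrt N) ^ N * ((Real.sqrt (Real.exp 1))⁻¹) ^ N
      ≤ Real.sqrt (N !) := by
  have hNpos : (0:ℝ) < N := by exact_mod_cast hN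
  have h1 : Real.sqrt π ≤ Stirling.stirlingSeq N := by
    obtain ⟨n, rfl⟩ : ∃ n, N = n + 1 := ⟨N - 1, by omega⟩
    have ht : Filter.Tendsto (Stirling.stirlingSeq ∘ Nat.succ) Filter.atTop
        (nhds (Real.sqrt π)) :=
      Stirling.tendsto_stirlingSeq_sqrt_pi.comp (Filter.tendsto_add_atTop_nat 1)
    exact Stirling.stirlingSeq'_antitone.le_of_tendsto ht n
  have hden : (0:ℝ) < Real.sqrt (2 * N) * ((N:ℝ) / Real.exp 1) ^ N := by positivity
  have h2 : Real.sqrt π * (Real.sqrt (2 * N) * ((N:ℝ) / Real.exp 1) ^ N) ≤ (N ! : ℝ) := by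
    rw [Stirling.stirlingSeq] at h1
    exact (le_div_iff₀ hden).mp h1
  have h3 : Real.sqrt (Real.sqrt π * (Real.sqrt (2 * N) * ((N:ℝ) / Real.exp 1) ^ N))
      ≤ Real.sqrt (N !) := Real.sqrt_le_sqrt h2
  refine le_trans ?_ h3
  rw [Real.sqrt_mul (Real.sqrt_nonneg _), Real.sqrt_mul (Real.sqrt_nonneg _)]
  have e1 : Real.sqrt (((N:ℝ) / Real.exp 1) ^ N)
      = (Real.sqrt N) ^ N * ((Real.sqrt (Real.exp 1))⁻¹) ^ N := by
    have : ((N:ℝ) / Real.exp 1) ^ N = ((Real.sqrt N * (Real.sqrt (Real.exp 1))⁻¹) ^ N) ^ 2 := by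
      rw [← pow_mul, mul_comm N 2, pow_mul]
      congr 1
      rw [mul_pow, Real.sq_sqrt (le_of_lt hNpos), inv_pow,
        Real.sq_sqrt (le_of_lt (Real.exp_pos 1))]
      rw [div_eq_mul_inv]
    rw [this, Real.sqrt_sq (by positivity), mul_pow]
  rw [e1]
  have e2 : (N:ℝ) ^ ((1:ℝ)/4) ≤ Real.sqrt (Real.sqrt (2 * N)) := by
    have h4 : (N:ℝ) ^ ((1:ℝ)/4) = Real.sqrt (Real.sqrt N) := by
      rw [Real.sqrt_eq_rpow, Real.sqrt_eq_rpow, ← Real.rpow_mul (le_of_lt hNpos)]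
      norm_num
    rw [h4]
    have : Real.sqrt N ≤ Real.sqrt (2 * N) := Real.sqrt_le_sqrt (by linarith)
    exact Real.sqrt_le_sqrt this
  have e3 : (1:ℝ) ≤ Real.sqrt (Real.sqrt π) := by
    have : (1:ℝ) ≤ Real.sqrt π := by
      rw [show (1:ℝ) = Real.sqrt 1 by simp]
      exact Real.sqrt_le_sqrt (by linarith [Real.pi_gt_three])
    rw [show (1:ℝ) = Real.sqrt 1 by simp]
    exact Real.sqrt_le_sqrt (by simpa using this)
  have hZ : (N:ℝ) ^ ((1:ℝ)/4) * ((Real.sqrt N) ^ N * ((Real.sqrt (Real.exp 1))⁻¹) ^ N)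
      ≤ Real.sqrt (Real.sqrt (2 * N)) * ((Real.sqrt N) ^ N * ((Real.sqrt (Real.exp 1))⁻¹) ^ N) :=
    mul_le_mul_of_nonneg_right e2 (by positivity)
  calc (N:ℝ) ^ ((1:ℝ)/4) * (Real.sqrt N) ^ N * ((Real.sqrt (Real.exp 1))⁻¹) ^ N
      = 1 * ((N:ℝ) ^ ((1:ℝ)/4) * ((Real.sqrt N) ^ N * ((Real.sqrt (Real.exp 1))⁻¹) ^ N)) := by
        ring
    _ ≤ 1 * (Real.sqrt (Real.sqrt (2 * N)) *
          ((Real.sqrt N) ^ N * ((Real.sqrt (Real.exp 1))⁻¹) ^ N)) :=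
        mul_le_mul_of_nonneg_left hZ (by norm_num)
    _ ≤ Real.sqrt (Real.sqrt π) * (Real.sqrt (Real.sqrt (2 * N)) *
          ((Real.sqrt N) ^ N * ((Real.sqrt (Real.exp 1))⁻¹) ^ N)) :=
        mul_le_mul_of_nonneg_right e3 (by positivity)

theorem hermite_poly_bound_ellipse_exterior :
    ∀ r ∈ Set.Ioo (0:ℝ) 1, ∃ C : ℝ, 0 < C ∧ ∃ L : ℝ, 0 < L ∧
      ∀ N : ℕ, 1 ≤ N → ∀ z : ℂ,
        1 ≤ z.re ^ 2 / (r⁻¹ + r) ^ 2 + z.im ^ 2 / (r⁻¹ - r) ^ 2 →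
        ‖hermiteP N (z * (Real.sqrt N : ℝ))‖ ≤
          C * (N : ℝ) ^ (-(1:ℝ)/4) * L ^ N * ‖z‖ ^ N := by
  intro r hr
  obtain ⟨hr0, hr1⟩ := hr
  have hrr : r * r⁻¹ = 1 := mul_inv_cancel₀ (ne_of_gt hr0)
  have hδ : 0 < r⁻¹ - r := by nlinarith [mul_pos hr0 hr0]
  set δ : ℝ := r⁻¹ - r with hδdef
  set c : ℝ := (Real.sqrt 2 * δ)⁻¹ with hcdef
  have hc0 : 0 < c := by positivity
  refine ⟨1, one_pos, Real.exp c * Real.sqrt (Real.exp 1), by positivity, ?_⟩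
  set L : ℝ := Real.exp c * Real.sqrt (Real.exp 1) with hLdef
  intro N hN z hz
  have hNpos : (0:ℝ) < N := by exact_mod_cast hN
  have ha : 0 < r⁻¹ + r := by positivity
  have hδa : δ ≤ r⁻¹ + r := by rw [hδdef]; linarith
  have ha2 : (0:ℝ) < (r⁻¹ + r) ^ 2 := by positivity
  have hb2 : (0:ℝ) < (r⁻¹ - r) ^ 2 := by positivity
  have hre : δ ^ 2 ≤ z.re ^ 2 + z.im ^ 2 := by
    have h2 := hz
    rw [div_add_div _ _ (ne_of_gt ha2) (ne_of_gt hb2), le_div_iff₀ (by positivity)] at h2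
    have hba : (r⁻¹ - r) ^ 2 ≤ (r⁻¹ + r) ^ 2 := by nlinarith
    have step1 : (r⁻¹ - r) ^ 2 * (r⁻¹ + r) ^ 2 ≤ (z.re ^ 2 + z.im ^ 2) * (r⁻¹ + r) ^ 2 := by
      nlinarith [mul_le_mul_of_nonneg_left hba (sq_nonneg z.re)]
    have := le_of_mul_le_mul_right step1 ha2
    rw [hδdef]
    linarith
  have hAz : δ ≤ ‖z‖ := by
    have habs2 : (‖z‖) ^ 2 = z.re ^ 2 + z.im ^ 2 := by
      rw [Complex.sq_norm, Complex.normSq_apply]; ring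
    nlinarith [norm_nonneg z, hδ, hre, habs2]
  set A := ‖z‖ with hAdef
  have hH := hermiteH_abs_le N hN hδ z hAz
  have hD : (0:ℝ) < (2 * π) ^ ((1:ℝ)/4) * Real.sqrt ((Nat.factorial N)) := by
    have : (0:ℝ) < ((Nat.factorial N) : ℝ) := by exact_mod_cast Nat.factorial_pos N
    positivity
  have habsP : ‖hermiteP N (z * (Real.sqrt N : ℝ))‖
      = ‖hermiteH N (z * (Real.sqrt N : ℝ))‖
        / ((2 * π) ^ ((1:ℝ)/4) * Real.sqrt ((Nat.factorial N))) := by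
    rw [hermiteP, norm_div, Complex.norm_of_nonneg hD.le]
  rw [habsP, div_le_iff₀ hD]
  have hexp : Real.exp (c * N) = Real.exp c ^ N := by
    rw [mul_comm, Real.exp_nat_mul]
  have hstir := sqrt_factorial_ge N hN
  have hNq : (N:ℝ) ^ (-(1:ℝ)/4) * (N:ℝ) ^ ((1:ℝ)/4) = 1 := by
    rw [← Real.rpow_add hNpos]
    norm_num
  have h2pi : (1:ℝ) ≤ (2 * π) ^ ((1:ℝ)/4) := by
    have h1 : (1:ℝ) ≤ 2 * π := by linarith [Real.pi_gt_three]
    calc (1:ℝ) = (1:ℝ) ^ ((1:ℝ)/4) := (Real.one_rpow _).symm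
      _ ≤ (2 * π) ^ ((1:ℝ)/4) := Real.rpow_le_rpow (by norm_num) h1 (by norm_num)
  have hse : Real.sqrt (Real.exp 1) ≠ 0 := ne_of_gt (Real.sqrt_pos.mpr (Real.exp_pos 1))
  have hee : ((Real.sqrt (Real.exp 1))⁻¹) ^ N * (Real.sqrt (Real.exp 1)) ^ N = 1 := by
    rw [← mul_pow, inv_mul_cancel₀ hse, one_pow]
  calc ‖hermiteH N (z * (Real.sqrt N : ℝ))‖
      ≤ (A * Real.sqrt N) ^ N * Real.exp (c * N) := hH
    _ = A ^ N * (Real.sqrt N) ^ N * Real.exp c ^ N := by rw [mul_pow, hexp]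
    _ = ((N:ℝ) ^ (-(1:ℝ)/4) * (N:ℝ) ^ ((1:ℝ)/4))
          * (((Real.sqrt (Real.exp 1))⁻¹) ^ N * (Real.sqrt (Real.exp 1)) ^ N)
          * (A ^ N * (Real.sqrt N) ^ N * Real.exp c ^ N) := by
        rw [hNq, hee]; ring
    _ = 1 * (N:ℝ) ^ (-(1:ℝ)/4) * L ^ N * A ^ N
          * (1 * ((N:ℝ) ^ ((1:ℝ)/4) * (Real.sqrt N) ^ N
              * ((Real.sqrt (Real.exp 1))⁻¹) ^ N)) := by
        rw [hLdef, mul_pow]; ring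
    _ ≤ 1 * (N:ℝ) ^ (-(1:ℝ)/4) * L ^ N * A ^ N
          * ((2 * π) ^ ((1:ℝ)/4) * Real.sqrt ((Nat.factorial N))) := by
        have hpre : (0:ℝ) ≤ 1 * (N:ℝ) ^ (-(1:ℝ)/4) * L ^ N * A ^ N := by
          have hL0 : (0:ℝ) < L := by rw [hLdef]; positivity
          have hA0 : (0:ℝ) ≤ A := norm_nonneg z
          positivity
        refine mul_le_mul_of_nonneg_left ?_ hpre
        exact mul_le_mul h2pi hstir (by positivity) (by positivity)

end
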